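/- Let n ≥ 1 and 0 < s < ∞. For every ξ ∈ ℝ^n with ξ ≠ 0, the determinant of the Hessian matrix of the function ξ ↦ |ξ|^s, i.e. of the n×n matrix (∂_{ξ_i}∂_{ξ_j} |ξ|^s)_{1≤i,j≤n}, equals s^n (s-1) |ξ|^{(s-2)n}. -/

import Mathlib

open MeasureTheory Complex
open scoped ENNReal

noncomputable section

/-- Euclidean space `ℝ^n`. -/
abbrev Euc (n : ℕ) := EuclideanSpace ℝ (Fin n)

/-- The Fourier transform `f̂(ξ) = ∫ e^{-i ξ·x} f(x) dx`. -/
def fourierInt {n : ℕ} (f : Euc n → ℂ) (ξ : Euc n) : ℂ :=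
  ∫ x : Euc n, Complex.exp (-(Complex.I * ((inner ℝ ξ x : ℝ) : ℂ))) * f x

/-- The inverse Fourier transform `g^∨(x) = (2π)^{-n} ∫ e^{i ξ·x} g(ξ) dξ`. -/
def invFourierInt {n : ℕ} (g : Euc n → ℂ) (x : Euc n) : ℂ :=
  ((((2 * Real.pi) ^ n)⁻¹ : ℝ)) • ∫ ξ : Euc n, Complex.exp (Complex.I * ((inner ℝ ξ x : ℝ) : ℂ)) * g ξ

/-- `‖θ‖_{C^M} = max_{|α| ≤ M} sup_ξ |∂^α θ(ξ)|`, formalized via iterated Fréchet derivatives. -/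
def CNorm {n : ℕ} (θ : Euc n → ℂ) (M : ℕ) : ℝ :=
  ⨆ k : Fin (M + 1), ⨆ x : Euc n, ‖iteratedFDeriv ℝ (k : ℕ) θ x‖

/-- The symbol class `S^m_{1,0}(ℝ^{2n})`:
`σ` is smooth and `‖∂^k σ(ξ,η)‖ ≤ C_k (1+|ξ|+|η|)^{m-k}` for every order `k`. -/
def SymbolClass (n : ℕ) (m : ℝ) (σ : Euc n × Euc n → ℂ) : Prop :=
  ContDiff ℝ (⊤ : ℕ∞) σ ∧
    ∀ k : ℕ, ∃ C : ℝ, 0 < C ∧ ∀ ξ η : Euc n,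
      ‖iteratedFDeriv ℝ k σ (ξ, η)‖ ≤ C * (1 + ‖ξ‖ + ‖η‖) ^ (m - (k : ℝ))

/-- The bilinear oscillatory Fourier multiplier operator `T^s_σ`. -/
def oscOp (n : ℕ) (s : ℝ) (σ : Euc n × Euc n → ℂ) (f g : Euc n → ℂ) (x : Euc n) : ℂ :=
  ((((2 * Real.pi) ^ (2 * n))⁻¹ : ℝ)) •
    ∫ ξ : Euc n, ∫ η : Euc n,
      Complex.exp (Complex.I * ((inner ℝ (ξ + η) x : ℝ) : ℂ)) *
        Complex.exp (Complex.I * ((‖ξ‖ ^ s + ‖η‖ ^ s : ℝ) : ℂ)) *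
        σ (ξ, η) * fourierInt f ξ * fourierInt g η

/-- `H_j = (e^{i|ξ|^s} ψ(2^{-j} ξ))^∨`. -/
def Hker (n : ℕ) (s : ℝ) (ψ : Euc n → ℂ) (j : ℕ) : Euc n → ℂ :=
  invFourierInt (fun ξ : Euc n =>
    Complex.exp (Complex.I * ((‖ξ‖ ^ s : ℝ) : ℂ)) * ψ ((((2 : ℝ) ^ j)⁻¹) • ξ))

/-- `K_j = (e^{i|ξ|^s} ζ(ξ) θ(2^{-j} ξ))^∨`. -/
def Kker (n : ℕ) (s : ℝ) (ζ : Euc n → ℝ) (θ : Euc n → ℂ) (j : ℕ) : Euc n → ℂ :=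
  invFourierInt (fun ξ : Euc n =>
    Complex.exp (Complex.I * ((‖ξ‖ ^ s : ℝ) : ℂ)) * ((ζ ξ : ℝ) : ℂ) *
      θ ((((2 : ℝ) ^ j)⁻¹) • ξ))

/-- `L = (e^{i|ξ|^s} θ(ξ))^∨`. -/
def Lker (n : ℕ) (s : ℝ) (θ : Euc n → ℂ) : Euc n → ℂ :=
  invFourierInt (fun ξ : Euc n => Complex.exp (Complex.I * ((‖ξ‖ ^ s : ℝ) : ℂ)) * θ ξ)

/-- Convolution `(K * f)(x) = ∫ K(x-y) f(y) dy`. -/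
def convOp {n : ℕ} (K f : Euc n → ℂ) (x : Euc n) : ℂ := ∫ y : Euc n, K (x - y) * f y

/-- An `h¹`-atom supported on the ball of radius `r` centered at the origin:
`0 < r ≤ 1`, `supp f ⊆ {|y| ≤ r}`, `‖f‖_∞ ≤ r^{-n}`, and `∫ f = 0` when `r < 1`. -/
def IsH1Atom (n : ℕ) (r : ℝ) (f : Euc n → ℂ) : Prop :=
  Measurable f ∧ 0 < r ∧ r ≤ 1 ∧
    Function.support f ⊆ Metric.closedBall 0 r ∧
    eLpNorm f ⊤ volume ≤ ENNReal.ofReal (r ^ (-(n : ℝ))) ∧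
    (r < 1 → (∫ y : Euc n, f y) = 0)

theorem myHasFDerivAt_norm_rpow_ne {E : Type*} [NormedAddCommGroup E] [InnerProductSpace ℝ E]
    {x : E} (hx : x ≠ 0) (p : ℝ) :
    HasFDerivAt (fun x : E ↦ ‖x‖ ^ p) ((p * ‖x‖ ^ (p - 2)) • innerSL ℝ x) x := by
  apply HasStrictFDerivAt.hasFDerivAt
  convert (hasStrictFDerivAt_norm_sq x).rpow_const (p := p / 2) (by simp [hx]) using 0
  simp_rw [← Real.rpow_natCast_mul (norm_nonneg _), ← Nat.cast_smul_eq_nsmul ℝ, smul_smul]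
  ring_nf

theorem myHessEntry {n : ℕ} (s : ℝ) (ξ : Euc n) (hξ : ξ ≠ 0) (i j : Fin n) :
    fderiv ℝ (fun y : Euc n =>
        fderiv ℝ (fun z : Euc n => ‖z‖ ^ s) y (EuclideanSpace.single j (1 : ℝ))) ξ
      (EuclideanSpace.single i (1 : ℝ)) =
    s * (s - 2) * ‖ξ‖ ^ (s - 4) * ξ i * ξ j
      + s * ‖ξ‖ ^ (s - 2) * (if i = j then (1:ℝ) else 0) := by
  have hev : (fun y : Euc n =>
      fderiv ℝ (fun z : Euc n => ‖z‖ ^ s) y (EuclideanSpace.single j (1 : ℝ)))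
      =ᶠ[nhds ξ] (fun y : Euc n => s * ‖y‖ ^ (s - 2) * y j) := by
    filter_upwards [IsOpen.mem_nhds isOpen_compl_singleton hξ] with y hy
    rw [(myHasFDerivAt_norm_rpow_ne hy s).fderiv]
    simp [real_inner_comm, EuclideanSpace.inner_single_left, EuclideanSpace.inner_single_right]
  rw [hev.fderiv_eq]
  have h1 : HasFDerivAt (fun y : Euc n => ‖y‖ ^ (s - 2))
      (((s - 2) * ‖ξ‖ ^ (s - 4)) • innerSL ℝ ξ) ξ := by
    have := myHasFDerivAt_norm_rpow_ne hξ (s - 2)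
    norm_num at this ⊢
    rw [show s - 2 - 2 = s - 4 by ring] at this
    exact this
  have h2 : HasFDerivAt (fun y : Euc n => y j)
      (EuclideanSpace.proj j : Euc n →L[ℝ] ℝ) ξ :=
    (EuclideanSpace.proj j : Euc n →L[ℝ] ℝ).hasFDerivAt
  have h3 := ((h1.const_mul s).mul h2).fderiv
  rw [show (fun y : Euc n => s * ‖y‖ ^ (s - 2) * y j) = ((fun y : Euc n => s * ‖y‖ ^ (s - 2)) * fun y : Euc n => y j) from rfl, h3]
  have hproj : (EuclideanSpace.proj j : Euc n →L[ℝ] ℝ) (EuclideanSpace.single i (1:ℝ)) =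
      (if j = i then (1:ℝ) else 0) := by
    simp [EuclideanSpace.proj, EuclideanSpace.single_apply]
  rcases eq_or_ne i j with rfl | h
  · simp [hproj, EuclideanSpace.inner_single_right]; ring
  · simp [hproj, EuclideanSpace.inner_single_right, h, Ne.symm h]; ring

theorem myDetRankOne {n : ℕ} (a b : ℝ) (u : Fin n → ℝ) :
    (Matrix.of fun i j : Fin n => a * b * u i * u j + a * (if i = j then (1:ℝ) else 0)).det
      = a ^ n * (1 + b * ∑ i, u i * u i) := by
  have : (Matrix.of fun i j : Fin n => a * b * u i * u j + a * (if i = j then (1:ℝ) else 0))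
      = a • (1 + Matrix.replicateCol Unit (fun i => b * u i) * Matrix.replicateRow Unit u) := by
    ext i j
    simp [Matrix.mul_apply, Matrix.one_apply, mul_add]
    split_ifs <;> ring
  rw [this, Matrix.det_smul, Matrix.det_one_add_replicateCol_mul_replicateRow]
  simp [dotProduct, Finset.mul_sum]
  left
  exact Finset.sum_congr rfl fun i _ => by ring

/-- the determinant of the Hessian of `ξ ↦ |ξ|^s` equals
`s^n (s-1) |ξ|^{(s-2)n}` for `ξ ≠ 0`. -/
theorem stmt3
    (n : ℕ) (hn : 1 ≤ n) (s : ℝ) (hs : 0 < s) (ξ : Euc n) (hξ : ξ ≠ 0) :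
    (Matrix.of fun i j : Fin n =>
        fderiv ℝ (fun y : Euc n =>
            fderiv ℝ (fun z : Euc n => ‖z‖ ^ s) y (EuclideanSpace.single j (1 : ℝ))) ξ
          (EuclideanSpace.single i (1 : ℝ))).det =
      s ^ n * (s - 1) * ‖ξ‖ ^ ((s - 2) * (n : ℝ)) := by
  have hr : 0 < ‖ξ‖ := norm_pos_iff.mpr hξ
  have hab : s * (s - 2) * ‖ξ‖ ^ (s - 4)
      = (s * ‖ξ‖ ^ (s - 2)) * ((s - 2) * ‖ξ‖ ^ (-2 : ℝ)) := by
    rw [mul_mul_mul_comm, ← Real.rpow_add hr]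
    ring_nf
  have hM : (Matrix.of fun i j : Fin n =>
      fderiv ℝ (fun y : Euc n =>
          fderiv ℝ (fun z : Euc n => ‖z‖ ^ s) y (EuclideanSpace.single j (1 : ℝ))) ξ
        (EuclideanSpace.single i (1 : ℝ)))
      = Matrix.of fun i j : Fin n =>
          (s * ‖ξ‖ ^ (s - 2)) * ((s - 2) * ‖ξ‖ ^ (-2 : ℝ)) * ξ i * ξ j
            + (s * ‖ξ‖ ^ (s - 2)) * (if i = j then (1:ℝ) else 0) := by
    ext i j
    rw [Matrix.of_apply, Matrix.of_apply, myHessEntry s ξ hξ i j, hab]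
  rw [hM, myDetRankOne]
  have hsum : ∑ i, ξ i * ξ i = ‖ξ‖ ^ (2 : ℕ) := by
    rw [EuclideanSpace.norm_sq_eq]
    simp [sq]
  rw [hsum]
  have h2 : ((s - 2) * ‖ξ‖ ^ (-2 : ℝ)) * ‖ξ‖ ^ (2 : ℕ) = s - 2 := by
    rw [mul_assoc, ← Real.rpow_natCast ‖ξ‖ 2, ← Real.rpow_add hr]
    norm_num
  rw [h2]
  rw [mul_pow, ← Real.rpow_natCast (‖ξ‖ ^ (s - 2)) n, ← Real.rpow_mul (norm_nonneg ξ)]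
  ring
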